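/- arXiv:2403.13939 — 7 statements merged into one kernel-verified Lean document; each statement's English description precedes it below -/
import Mathlib

section
/- If the set of torsion elements T_R(M) forms a submodule of M, then M is torsion free if and only if M is regular fusible. -/
open MulOpposite

/-- `m` is a torsion element of the right `R`-module `M`. -/
def IsTorsionElt (R M : Type*) [Ring R] [AddCommGroup M] [Module Rᵐᵒᵖ M] (m : M) : Prop :=
  ∃ r : R, r ≠ 0 ∧ op r • m = 0

/-- `m` is a torsion-free element of the right `R`-module `M` (`ann_R(m) = 0`). -/
def IsTorsionFreeElt (R M : Type*) [Ring R] [AddCommGroup M] [Module Rᵐᵒᵖ M] (m : M) : Prop :=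
  ∀ r : R, op r • m = 0 → r = 0

/-- `r ∈ Zd(M)`: `r` is a zero divisor of the right `R`-module `M`. -/
def IsZdElt (R M : Type*) [Ring R] [AddCommGroup M] [Module Rᵐᵒᵖ M] (r : R) : Prop :=
  ∃ m : M, m ≠ 0 ∧ op r • m = 0

/-- `m` is fusible: it is the sum of a torsion and a torsion-free element. -/
def FusibleElt (R M : Type*) [Ring R] [AddCommGroup M] [Module Rᵐᵒᵖ M] (m : M) : Prop :=
  ∃ x y : M, IsTorsionElt R M x ∧ IsTorsionFreeElt R M y ∧ m = x + y

/-- `M` is a fusible right `R`-module. -/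
def FusibleModule (R M : Type*) [Ring R] [AddCommGroup M] [Module Rᵐᵒᵖ M] : Prop :=
  ∀ m : M, m ≠ 0 → FusibleElt R M m

/-- `M` is a regular fusible right `R`-module. -/
def RegularFusibleModule (R M : Type*) [Ring R] [AddCommGroup M] [Module Rᵐᵒᵖ M] : Prop :=
  ∀ m : M, m ≠ 0 → ∃ r : R, ¬ IsZdElt R M r ∧ FusibleElt R M (op r • m)

section TorsionElements

variable {R M : Type*} [Ring R] [AddCommGroup M] [Module Rᵐᵒᵖ M]

theorem isTorsionFreeElt_iff_not_isTorsionElt {m : M} :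
    IsTorsionFreeElt R M m ↔ ¬ IsTorsionElt R M m := by
  simp only [IsTorsionFreeElt, IsTorsionElt, not_exists, not_and, not_imp_not]

theorem isTorsionElt_zero [Nontrivial R] : IsTorsionElt R M 0 :=
  ⟨1, one_ne_zero, smul_zero _⟩

theorem IsTorsionElt.neg {x : M} (hx : IsTorsionElt R M x) : IsTorsionElt R M (-x) := by
  obtain ⟨t, ht, htx⟩ := hx
  exact ⟨t, ht, by rw [smul_neg, htx, neg_zero]⟩

theorem not_isZdElt_one : ¬ IsZdElt R M 1 := by
  rintro ⟨m, hm, hm1⟩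
  exact hm (by rwa [op_one, one_smul] at hm1)

theorem IsTorsionFreeElt.fusibleElt [Nontrivial R] {m : M} (hm : IsTorsionFreeElt R M m) :
    FusibleElt R M m :=
  ⟨0, m, isTorsionElt_zero, hm, (zero_add m).symm⟩

theorem not_fusibleElt_of_isTorsionElt
    (hadd : ∀ x y : M, IsTorsionElt R M x → IsTorsionElt R M y → IsTorsionElt R M (x + y))
    {z : M} (hz : IsTorsionElt R M z) : ¬ FusibleElt R M z := by
  rintro ⟨x, y, hx, hy, rfl⟩
  have hy_torsion : IsTorsionElt R M y := by
    simpa only [add_neg_cancel_comm] using hadd _ _ hz hx.neg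
  exact isTorsionFreeElt_iff_not_isTorsionElt.mp hy hy_torsion

end TorsionElements

/-- If the torsion elements form a submodule, then `M` is torsion free iff
`M` is regular fusible. -/
theorem torsionFree_iff_regularFusible_of_torsion_submodule (R M : Type*) [Ring R]
    [AddCommGroup M] [Module Rᵐᵒᵖ M]
    (hadd : ∀ x y : M, IsTorsionElt R M x → IsTorsionElt R M y → IsTorsionElt R M (x + y))
    (hsmul : ∀ (r : R) (x : M), IsTorsionElt R M x → IsTorsionElt R M (op r • x)) :
    (∀ m : M, IsTorsionElt R M m → m = 0) ↔ RegularFusibleModule R M := by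
  constructor
  · intro htf m hm
    have : Nontrivial M := ⟨⟨m, 0, hm⟩⟩
    have : Nontrivial Rᵐᵒᵖ := Module.nontrivial Rᵐᵒᵖ M
    have : Nontrivial R := unop_injective.nontrivial
    have hm_free : IsTorsionFreeElt R M m :=
      isTorsionFreeElt_iff_not_isTorsionElt.mpr fun h => hm (htf m h)
    exact ⟨1, not_isZdElt_one, by simpa only [op_one, one_smul] using hm_free.fusibleElt⟩
  · intro hrf m hm
    by_contra hm0
    obtain ⟨r, -, hfus⟩ := hrf m hm0
    exact not_fusibleElt_of_isTorsionElt hadd (hsmul r m hm) hfus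
end

section
/- Suppose R satisfies the comparability relation between right annihilators of elements of M (for all m1, m2 ∈ M, ann_R(m1) ⊆ ann_R(m2) or ann_R(m2) ⊆ ann_R(m1)), and R − Zd(M) is contained in the center of R. Then M is regular fusible if and only if M is torsion free. -/
open MulOpposite

/-!
If `m ≠ 0` were torsion, write `m r = x + y` as in the definition of regular fusibility. Since `r`
is central, `ann(m) ⊆ ann(m r) = ann(x + y)`. Comparing `ann(m)` with `ann(x)`: if `ann(m) ⊆ ann(x)`,
a nonzero annihilator of `m` also kills `y`; if `ann(x) ⊆ ann(m)`, a nonzero annihilator of `x`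
kills `y`. Either way the torsion-free `y` is killed by a nonzero scalar. Conversely, in a
torsion-free module `m = 0 + m` is already a decomposition of `m · 1`.
-/

section

variable {R M : Type*} [Ring R] [AddCommGroup M] [Module Rᵐᵒᵖ M]

theorem IsTorsionFreeElt.eq_zero_of_smul_eq_zero_of_smul_add_eq_zero {x y : M}
    (hy : IsTorsionFreeElt R M y) {t : R} (hx : op t • x = 0) (hxy : op t • (x + y) = 0) :
    t = 0 :=
  hy t (by rwa [smul_add, hx, zero_add] at hxy)

theorem op_smul_op_smul_eq_zero_of_commute {r t : R} (h : Commute r t) {m : M}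
    (hm : op t • m = 0) : op t • op r • m = 0 := by
  rw [← mul_smul, ← op_mul, h.eq, op_mul, mul_smul, hm, smul_zero]

theorem isTorsionFreeElt_of_annihilator_subset_add {m x y : M} (hx : IsTorsionElt R M x)
    (hy : IsTorsionFreeElt R M y) (hmxy : ∀ t : R, op t • m = 0 → op t • (x + y) = 0)
    (hcomp : (∀ t : R, op t • m = 0 → op t • x = 0) ∨ (∀ t : R, op t • x = 0 → op t • m = 0)) :
    IsTorsionFreeElt R M m := by
  rcases hcomp with hmx | hxm
  · exact fun t ht ↦ hy.eq_zero_of_smul_eq_zero_of_smul_add_eq_zero (hmx t ht) (hmxy t ht)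
  · obtain ⟨s, hs, hsx⟩ := hx
    exact absurd (hy.eq_zero_of_smul_eq_zero_of_smul_add_eq_zero hsx (hmxy s (hxm s hsx))) hs

theorem regularFusibleModule_of_torsionFree (h : ∀ m : M, IsTorsionElt R M m → m = 0) :
    RegularFusibleModule R M := by
  intro m hm
  have : Nontrivial M := nontrivial_of_ne m 0 hm
  have : Nontrivial Rᵐᵒᵖ := Module.nontrivial Rᵐᵒᵖ M
  have : Nontrivial R := unop_injective.nontrivial
  refine ⟨1, not_isZdElt_one, 0, m, isTorsionElt_zero,
    isTorsionFreeElt_iff_not_isTorsionElt.mpr fun ht ↦ hm (h m ht), ?_⟩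
  rw [op_one, one_smul, zero_add]

end

/-- If annihilators of elements of `M` are comparable and `R − Zd(M)` is contained in the
center of `R`, then `M` is regular fusible iff `M` is torsion free. -/
theorem regularFusible_iff_torsionFree_of_comparable (R M : Type*) [Ring R]
    [AddCommGroup M] [Module Rᵐᵒᵖ M]
    (hcomp : ∀ m₁ m₂ : M, (∀ r : R, op r • m₁ = 0 → op r • m₂ = 0) ∨
      (∀ r : R, op r • m₂ = 0 → op r • m₁ = 0))
    (hcen : ∀ r : R, ¬ IsZdElt R M r → ∀ s : R, r * s = s * r) :
    RegularFusibleModule R M ↔ (∀ m : M, IsTorsionElt R M m → m = 0) := by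
  refine ⟨fun hrf m hm ↦ ?_, regularFusibleModule_of_torsionFree⟩
  by_contra hm0
  obtain ⟨r, hr, x, y, hx, hy, hrm⟩ := hrf m hm0
  have hann : ∀ t : R, op t • m = 0 → op t • (x + y) = 0 := fun t ht ↦
    hrm ▸ op_smul_op_smul_eq_zero_of_commute (hcen r hr t) ht
  exact isTorsionFreeElt_iff_not_isTorsionElt.mp
    (isTorsionFreeElt_of_annihilator_subset_add hx hy hann (hcomp m x)) hm
end

section
/- If R − Zd(M) is contained in the center of R and M is a regular fusible module, then M is nonsingular (Z(M) = 0). -/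
open MulOpposite

/-- `m` is a singular element: its annihilator meets every nonzero right ideal of `R`
nontrivially (i.e. `ann_R(m)` is an essential right ideal). -/
def IsSingularElt (R M : Type*) [Ring R] [AddCommGroup M] [Module Rᵐᵒᵖ M] (m : M) : Prop :=
  ∀ J : Submodule Rᵐᵒᵖ R, J ≠ ⊥ → ∃ x : R, x ≠ 0 ∧ x ∈ J ∧ op x • m = 0

/-!
A singular element is never fusible: if `m = x + y` with `x t = 0`, `t ≠ 0`, the essential right
ideal `ann(m)` meets `tR ⊆ ann(x)` in some `s ≠ 0`, and then `y s = 0` contradicts torsion-freeness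
of `y`. For central `r` we have `ann(m) ⊆ ann(m r)`, so `m r` stays singular, while regular
fusibility makes `m r` fusible for a suitable regular `r` as soon as `m ≠ 0`.
-/

section

variable {R M : Type*} [Ring R] [AddCommGroup M] [Module Rᵐᵒᵖ M]

theorem op_smul_eq_zero_of_mem_span_singleton {t s : R} {x : M} (htx : op t • x = 0)
    (hs : s ∈ Submodule.span Rᵐᵒᵖ {t}) : op s • x = 0 := by
  obtain ⟨a, rfl⟩ := Submodule.mem_span_singleton.mp hs
  change op (t * a.unop) • x = 0
  rw [op_mul, op_unop, mul_smul, htx, smul_zero]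

theorem IsSingularElt.not_fusibleElt {m : M} (hm : IsSingularElt R M m) : ¬ FusibleElt R M m := by
  rintro ⟨x, y, ⟨t, ht, htx⟩, hy, rfl⟩
  have hJ : Submodule.span Rᵐᵒᵖ {t} ≠ ⊥ := by
    rwa [Ne, Submodule.span_singleton_eq_bot]
  obtain ⟨s, hs, hsJ, hsm⟩ := hm _ hJ
  have hsx : op s • x = 0 := op_smul_eq_zero_of_mem_span_singleton htx hsJ
  rw [smul_add, hsx, zero_add] at hsm
  exact hs (hy s hsm)

theorem IsSingularElt.op_smul_of_commute {m : M} (hm : IsSingularElt R M m) {r : R}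
    (hr : ∀ s : R, r * s = s * r) : IsSingularElt R M (op r • m) := by
  intro J hJ
  obtain ⟨s, hs, hsJ, hsm⟩ := hm J hJ
  refine ⟨s, hs, hsJ, ?_⟩
  rw [← mul_smul, ← op_mul, hr s, op_mul, mul_smul, hsm, smul_zero]

end

/-- If `R − Zd(M)` is contained in the center of `R` and `M` is regular fusible,
then `M` is nonsingular. -/
theorem regularFusible_nonsingular (R M : Type*) [Ring R] [AddCommGroup M]
    [Module Rᵐᵒᵖ M]
    (hcen : ∀ r : R, ¬ IsZdElt R M r → ∀ s : R, r * s = s * r)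
    (h : RegularFusibleModule R M) :
    ∀ m : M, IsSingularElt R M m → m = 0 := by
  intro m hm
  by_contra hm0
  obtain ⟨r, hr, hfus⟩ := h m hm0
  exact (hm.op_smul_of_commute (hcen r hr)).not_fusibleElt hfus
end

section
/- Every regular fusible module over a right duo ring (a ring in which Ra ⊆ aR for all a) is nonsingular. -/
open MulOpposite

/- If `m ≠ 0` were singular, regular fusibility gives `mr = x + y` with `xa = 0` for
some `a ≠ 0` and `y` torsion-free. In a right duo ring `ann(m)` is a two-sided ideal, so `mr` is
singular as well; essentiality of `ann(mr)` produces `b = as ≠ 0` with `mrb = 0`, and then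
`yb = mrb - xb = 0` contradicts torsion-freeness of `y`. -/

namespace IsSingularElt

variable {R M : Type*} [Ring R] [AddCommGroup M] [Module Rᵐᵒᵖ M] {m : M}

theorem exists_mul_ne_zero (hm : IsSingularElt R M m) {a : R} (ha : a ≠ 0) :
    ∃ s : R, a * s ≠ 0 ∧ op (a * s) • m = 0 := by
  have hspan : Submodule.span Rᵐᵒᵖ {a} ≠ ⊥ := by
    simpa only [ne_eq, Submodule.span_singleton_eq_bot] using ha
  obtain ⟨b, hb0, hb, hbm⟩ := hm _ hspan
  obtain ⟨s, rfl⟩ := Submodule.mem_span_singleton.mp hb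
  exact ⟨s.unop, hb0, hbm⟩

theorem not_fusibleElt_s7 (hm : IsSingularElt R M m) : ¬ FusibleElt R M m := by
  rintro ⟨x, y, ⟨a, ha0, hax⟩, hy, rfl⟩
  obtain ⟨s, hs0, hsm⟩ := hm.exists_mul_ne_zero ha0
  have hsx : op (a * s) • x = 0 := by rw [op_mul, mul_smul, hax, smul_zero]
  rw [smul_add, hsx, zero_add] at hsm
  exact hs0 (hy _ hsm)

theorem op_smul_of_rightDuo (hduo : ∀ a r : R, ∃ r' : R, r * a = a * r')
    (hm : IsSingularElt R M m) (r : R) : IsSingularElt R M (op r • m) := by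
  intro J hJ
  obtain ⟨b, hb0, hbJ, hbm⟩ := hm J hJ
  obtain ⟨r', hr'⟩ := hduo b r
  refine ⟨b, hb0, hbJ, ?_⟩
  rw [smul_smul, ← op_mul, hr', op_mul, mul_smul, hbm, smul_zero]

end IsSingularElt

/-- Every regular fusible module over a right duo ring is nonsingular. -/
theorem regularFusible_nonsingular_of_rightDuo (R M : Type*) [Ring R] [AddCommGroup M]
    [Module Rᵐᵒᵖ M]
    (hduo : ∀ a r : R, ∃ r' : R, r * a = a * r')
    (h : RegularFusibleModule R M) :
    ∀ m : M, IsSingularElt R M m → m = 0 := by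
  intro m hm
  by_contra hm0
  obtain ⟨r, -, hfus⟩ := h m hm0
  exact (hm.op_smul_of_rightDuo hduo r).not_fusibleElt_s7 hfus
end

section
/- Every regular fusible module over a right duo ring is reduced. -/
open MulOpposite

/-! If `x = m r = m' a` with `m a = 0`, then `x a = 0`, and right duoness propagates this to every
multiple `y = x u`. A decomposition `y = z + t` with `z c = 0`, `c ≠ 0` and `t` torsion-free then
collapses: `t (a c) = y (a c) - z (a c) = 0` forces `a c = 0`, hence `x c = m' (a c) = 0` and so
`t c = y c - z c = 0`, forcing `c = 0`. So no multiple of a nonzero such `x` is fusible. -/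

open scoped RightActions

def IsRightDuo (R : Type*) [Ring R] : Prop :=
  ∀ a r : R, ∃ r' : R, r * a = a * r'

section

variable {R M : Type*} [Ring R] [AddCommGroup M] [Module Rᵐᵒᵖ M]

theorem IsTorsionFreeElt.eq_zero_of_add_op_smul_eq_zero {z t : M} {b : R}
    (ht : IsTorsionFreeElt R M t) (hz : z <• b = 0) (h : (z + t) <• b = 0) : b = 0 :=
  ht b (by rwa [smul_add, hz, zero_add] at h)

/-- In a right duo ring `s b ∈ b R`, so the annihilator of an element is a two-sided ideal. -/
theorem IsRightDuo.op_smul_mul_eq_zero (hR : IsRightDuo R) {n : M} {b : R} (hb : n <• b = 0)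
    (s : R) : n <• (s * b) = 0 := by
  obtain ⟨s', hs'⟩ := hR b s
  rw [hs', op_smul_mul, hb, smul_zero]

theorem IsRightDuo.op_smul_op_smul_eq_zero (hR : IsRightDuo R) {n : M} {b : R}
    (hb : n <• b = 0) (s : R) : n <• s <• b = 0 := by
  rw [op_smul_op_smul]
  exact hR.op_smul_mul_eq_zero hb s

theorem IsRightDuo.not_fusibleElt_op_smul (hR : IsRightDuo R) {n : M} {a : R}
    (hna : n <• a <• a = 0) (u : R) : ¬ FusibleElt R M (n <• a <• u) := by
  rintro ⟨z, t, ⟨c, hc, hzc⟩, ht, hsum⟩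
  have hac : a * c = 0 :=
    ht.eq_zero_of_add_op_smul_eq_zero (hR.op_smul_mul_eq_zero hzc a) <| by
      rw [← hsum, op_smul_mul, hR.op_smul_op_smul_eq_zero hna u, smul_zero]
  have hnac : n <• a <• c = 0 := by
    rw [op_smul_op_smul, hac, op_zero, zero_smul]
  refine hc (ht.eq_zero_of_add_op_smul_eq_zero hzc ?_)
  rw [← hsum, op_smul_op_smul]
  exact hR.op_smul_mul_eq_zero hnac u

end

/-- Every regular fusible module over a right duo ring is reduced:
if `ma = 0` then `mR ∩ Ma = 0`. -/
theorem regularFusible_reduced_of_rightDuo (R M : Type*) [Ring R] [AddCommGroup M]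
    [Module Rᵐᵒᵖ M]
    (hduo : ∀ a r : R, ∃ r' : R, r * a = a * r')
    (h : RegularFusibleModule R M) :
    ∀ (m : M) (a : R), op a • m = 0 →
      ∀ x : M, (∃ r : R, x = op r • m) → (∃ m' : M, x = op a • m') → x = 0 := by
  rintro m a hma x ⟨r, rfl⟩ ⟨n, hn⟩
  by_contra hx
  obtain ⟨u, -, hfus⟩ := h _ hx
  have hna : n <• a <• a = 0 := hn ▸ IsRightDuo.op_smul_op_smul_eq_zero hduo hma r
  exact IsRightDuo.not_fusibleElt_op_smul hduo hna u (hn ▸ hfus)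
end

section
/- Every fusible module over a right duo ring is reduced. -/
open MulOpposite

/-! Over a right duo ring the annihilator of an element is a two-sided ideal. Let `x = m r = n a`
with `m a = 0`, so `x a = 0`. If `x ≠ 0`, write `x = u + v` with `u b = 0`, `b ≠ 0` and `v`
torsion-free. Both `u` and `x` are killed by `a b`, hence so is `v`, and `a b = 0`; then
`x b = n (a b) = 0` forces `v b = 0`, i.e. `b = 0`. -/

theorem smul_smul_eq_zero_of_rightDuo {R M : Type*} [Ring R] [AddCommGroup M] [Module Rᵐᵒᵖ M]
    (hduo : ∀ a r : R, ∃ r' : R, r * a = a * r') {m : M} {a : R} (hm : op a • m = 0) (r : R) :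
    op a • op r • m = 0 := by
  obtain ⟨r', hr'⟩ := hduo a r
  rw [smul_smul, ← op_mul, hr', op_mul, mul_smul, hm, smul_zero]

theorem IsTorsionFreeElt.eq_zero_of_smul_add_eq_zero {R M : Type*} [Ring R] [AddCommGroup M]
    [Module Rᵐᵒᵖ M] {u v : M} {b : R} (hv : IsTorsionFreeElt R M v) (hu : op b • u = 0)
    (h : op b • (u + v) = 0) : b = 0 :=
  hv b (by rwa [smul_add, hu, zero_add] at h)

/-- Every fusible module over a right duo ring is reduced:
if `ma = 0` then `mR ∩ Ma = 0`. -/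
theorem fusible_reduced_of_rightDuo (R M : Type*) [Ring R] [AddCommGroup M]
    [Module Rᵐᵒᵖ M]
    (hduo : ∀ a r : R, ∃ r' : R, r * a = a * r')
    (h : FusibleModule R M) :
    ∀ (m : M) (a : R), op a • m = 0 →
      ∀ x : M, (∃ r : R, x = op r • m) → (∃ m' : M, x = op a • m') → x = 0 := by
  intro m a hma x ⟨r, hr⟩ ⟨n, hn⟩
  have hxa : op a • x = 0 := hr ▸ smul_smul_eq_zero_of_rightDuo hduo hma r
  by_contra hx0
  obtain ⟨u, v, ⟨b, hb0, hub⟩, hv, hx⟩ := h x hx0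
  have hab : a * b = 0 := by
    refine hv.eq_zero_of_smul_add_eq_zero (u := u) ?_ ?_
    · rw [op_mul, mul_smul, smul_smul_eq_zero_of_rightDuo hduo hub a]
    · rw [← hx, op_mul, mul_smul, hxa, smul_zero]
  refine hb0 (hv.eq_zero_of_smul_add_eq_zero hub ?_)
  rw [← hx, hn, smul_smul, ← op_mul, hab, op_zero, zero_smul]
end

section
/- Let M be an A-bimodule with ann_l(M) ⊆ ann_r(M) and A ∝ M the trivial extension. For a ∈ A and m ∈ M, the element (a, m) is a left zero divisor of A ∝ M if and only if a is a left zero divisor of A or a is a left zero divisor on M (i.e., am' = 0 for some 0 ≠ m' ∈ M). -/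
open MulOpposite

namespace TrivSqZeroExt

variable {R M : Type*} [Semiring R] [AddCommMonoid M] [Module R M] [Module Rᵐᵒᵖ M]

theorem mul_inr (x : TrivSqZeroExt R M) (m : M) : x * inr m = inr (x.fst • m) := by
  ext <;> simp

theorem fst_mul_eq_zero_or_fst_smul_eq_zero_of_mul_eq_zero {x w : TrivSqZeroExt R M}
    (hw : w ≠ 0) (h : x * w = 0) :
    (∃ b : R, b ≠ 0 ∧ x.fst * b = 0) ∨ ∃ m : M, m ≠ 0 ∧ x.fst • m = 0 := by
  by_cases hw₁ : w.fst = 0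
  · refine .inr ⟨w.snd, fun hw₂ => hw (ext hw₁ hw₂), ?_⟩
    simpa [hw₁] using congrArg snd h
  · exact .inl ⟨w.fst, hw₁, by simpa using congrArg fst h⟩

theorem exists_ne_zero_mul_eq_zero_of_fst_smul_eq_zero {x : TrivSqZeroExt R M} {m : M}
    (hm : m ≠ 0) (h : x.fst • m = 0) : ∃ w : TrivSqZeroExt R M, w ≠ 0 ∧ x * w = 0 :=
  ⟨inr m, fun hw => hm (inr_injective (hw.trans (inr_zero R).symm)),
    by rw [mul_inr, h, inr_zero]⟩

theorem exists_ne_zero_mul_eq_zero_of_fst_mul_eq_zero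
    (hann : ∀ r : R, (∀ m : M, r • m = 0) → ∀ m : M, op r • m = 0)
    {x : TrivSqZeroExt R M} (hreg : ∀ m : M, x.fst • m = 0 → m = 0) {b : R} (hb : b ≠ 0)
    (hab : x.fst * b = 0) :
    ∃ w : TrivSqZeroExt R M, w ≠ 0 ∧ x * w = 0 := by
  have hbM : ∀ m : M, b • m = 0 := fun m => hreg _ (by rw [← mul_smul, hab, zero_smul])
  refine ⟨inl b, fun h => hb (inl_injective (h.trans (inl_zero M).symm)), ?_⟩
  rw [mul_inl_eq_op_smul]
  ext
  · exact hab
  · exact hann b hbM x.snd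

end TrivSqZeroExt

open TrivSqZeroExt

theorem trivSqZeroExt_leftZeroDivisor_iff_general (A M : Type*) [Ring A] [AddCommGroup M]
    [Module A M] [Module Aᵐᵒᵖ M]
    (hann : ∀ a : A, (∀ m : M, a • m = 0) → (∀ m : M, op a • m = 0))
    (a : A) (m : M) :
    (∃ w : TrivSqZeroExt A M, w ≠ 0 ∧
        (TrivSqZeroExt.inl a + TrivSqZeroExt.inr m) * w = 0) ↔
      (∃ b : A, b ≠ 0 ∧ a * b = 0) ∨ (∃ m' : M, m' ≠ 0 ∧ a • m' = 0) := by
  have hx : (inl a + inr m : TrivSqZeroExt A M).fst = a := by simp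
  constructor
  · rintro ⟨w, hw, h⟩
    simpa only [hx] using fst_mul_eq_zero_or_fst_smul_eq_zero_of_mul_eq_zero hw h
  · intro h
    by_cases hker : ∃ m' : M, m' ≠ 0 ∧ a • m' = 0
    · obtain ⟨m', hm', ham'⟩ := hker
      exact exists_ne_zero_mul_eq_zero_of_fst_smul_eq_zero hm' (by rwa [hx])
    · obtain ⟨b, hb, hab⟩ := h.resolve_right hker
      have hreg : ∀ m' : M, a • m' = 0 → m' = 0 := fun m' ham' =>
        not_not.1 fun hm' => hker ⟨m', hm', ham'⟩
      exact exists_ne_zero_mul_eq_zero_of_fst_mul_eq_zero hann (by rwa [hx]) hb (by rwa [hx])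

/-- In the trivial extension `A ∝ M` of a ring `A` by an `A`-bimodule `M` with
`ann_l(M) ⊆ ann_r(M)`, the element `(a, m)` is a left zero divisor iff `a` is a
left zero divisor of `A` or `a` is a left zero divisor on `M`. -/
theorem trivSqZeroExt_leftZeroDivisor_iff (A M : Type*) [Ring A] [AddCommGroup M]
    [Module A M] [Module Aᵐᵒᵖ M] [SMulCommClass A Aᵐᵒᵖ M]
    (hann : ∀ a : A, (∀ m : M, a • m = 0) → (∀ m : M, op a • m = 0))
    (a : A) (m : M) :
    (∃ w : TrivSqZeroExt A M, w ≠ 0 ∧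
        (TrivSqZeroExt.inl a + TrivSqZeroExt.inr m) * w = 0) ↔
      (∃ b : A, b ≠ 0 ∧ a * b = 0) ∨ (∃ m' : M, m' ≠ 0 ∧ a • m' = 0) :=
  trivSqZeroExt_leftZeroDivisor_iff_general A M hann a m
end
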